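/- Let N be a positive integer and define the directivity function D(x) = ‖∑_{n=0}^{N−1} exp(I·π·n·x)‖² for x ∈ ℝ. Let x, y be real numbers such that N(y − x)/2 is an integer and the distance from x to the set of even integers is at most the distance from y to the set of even integers. Then D(y) ≤ D(x). Moreover, if the distance from x to the set of even integers is strictly less than that of y and sin(Nπx/2) ≠ 0, then D(y) < D(x). -/

import Mathlib

open Complex Finset

/-- The antenna directivity function `D(x) = ‖∑_{n=0}^{N−1} exp(I·π·n·x)‖²` of a
half-wavelength uniform linear array with `N` elements. -/
noncomputable def directivity (N : ℕ) (x : ℝ) : ℝ :=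
  ‖∑ n ∈ Finset.range N, Complex.exp (Complex.I * (Real.pi : ℂ) * (n : ℂ) * (x : ℂ))‖ ^ 2

/-- The distance from a real number `z` to the set of even integers. -/
noncomputable def distToEven (z : ℝ) : ℝ := ⨅ k : ℤ, |z - 2 * (k : ℝ)|

/-!
Summing the geometric series gives `D(x) · sin²(πx/2) = sin²(Nπx/2)` for every `x`. The
numerator `sin²(Nπx/2)` does not change when `x` moves by a multiple of `2/N`, while
`sin²(πx/2) = sin²(π d/2)` with `d ∈ [0, 1]` the distance from `x` to the even integers, a
strictly increasing function of `d`. Where `sin(πx/2) = 0` the array is fully coherent and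
`D(x) = N²` is the maximum.
-/

theorem abs_sub_two_mul (z w : ℝ) : |z - 2 * w| = 2 * |z / 2 - w| := by
  rw [← abs_two, ← abs_mul, abs_two]; ring_nf

theorem Real.sin_sq_add_int_mul_pi (x : ℝ) (n : ℤ) :
    Real.sin (x + n * Real.pi) ^ 2 = Real.sin x ^ 2 := by
  rw [Real.sin_add_int_mul_pi, mul_pow, ← sq_abs ((-1 : ℝ) ^ n), abs_neg_one_zpow, one_pow,
    one_mul]

theorem norm_geom_sum_exp_I_mul_mul_abs_sin (N : ℕ) (θ : ℝ) :
    ‖∑ n ∈ range N, exp (I * θ) ^ n‖ * |Real.sin (θ / 2)| = |Real.sin (N * θ / 2)| := by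
  have h := congrArg norm (geom_sum_mul (exp (I * θ)) N)
  rw [norm_mul, norm_exp_I_mul_ofReal_sub_one, ← exp_nat_mul,
    show (N : ℂ) * (I * θ) = I * ((N * θ : ℝ) : ℂ) by push_cast; ring,
    norm_exp_I_mul_ofReal_sub_one, norm_mul, norm_mul, Real.norm_two, Real.norm_eq_abs,
    Real.norm_eq_abs] at h
  linear_combination h / 2

theorem directivity_eq_norm_geom_sum_sq (N : ℕ) (x : ℝ) :
    directivity N x = ‖∑ n ∈ range N, exp (I * (Real.pi * x : ℝ)) ^ n‖ ^ 2 := by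
  unfold directivity
  congr 3 with n
  rw [← exp_nat_mul]
  push_cast
  ring_nf

theorem directivity_mul_sin_sq (N : ℕ) (x : ℝ) :
    directivity N x * Real.sin (Real.pi * x / 2) ^ 2 = Real.sin (N * Real.pi * x / 2) ^ 2 := by
  rw [directivity_eq_norm_geom_sum_sq, ← sq_abs (Real.sin _), ← mul_pow,
    norm_geom_sum_exp_I_mul_mul_abs_sin, sq_abs, mul_assoc]

theorem directivity_le_sq (N : ℕ) (x : ℝ) : directivity N x ≤ N ^ 2 := by
  rw [directivity_eq_norm_geom_sum_sq]
  gcongr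
  calc ‖∑ n ∈ range N, exp (I * (Real.pi * x : ℝ)) ^ n‖
      ≤ ∑ n ∈ range N, ‖exp (I * (Real.pi * x : ℝ)) ^ n‖ := norm_sum_le _ _
    _ = N := by simp only [norm_pow, norm_exp_I_mul_ofReal, one_pow, sum_const, card_range,
        nsmul_eq_mul, mul_one]

theorem directivity_of_sin_eq_zero (N : ℕ) {x : ℝ} (hx : Real.sin (Real.pi * x / 2) = 0) :
    directivity N x = N ^ 2 := by
  obtain ⟨k, hk⟩ := Real.sin_eq_zero_iff.mp hx
  have hexp : exp (I * (Real.pi * x : ℝ)) = 1 := by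
    rw [show Real.pi * x = k * (2 * Real.pi) by linarith]
    push_cast
    rw [show I * (k * (2 * Real.pi)) = k * (2 * Real.pi * I) by ring]
    exact exp_int_mul_two_pi_mul_I k
  rw [directivity_eq_norm_geom_sum_sq, hexp]
  simp

theorem distToEven_eq_abs_sub_round (z : ℝ) : distToEven z = |z - 2 * round (z / 2)| := by
  refine le_antisymm (ciInf_le ⟨0, ?_⟩ _) (le_ciInf fun k => ?_)
  · rintro _ ⟨k, rfl⟩
    exact abs_nonneg _
  · rw [abs_sub_two_mul, abs_sub_two_mul]
    exact mul_le_mul_of_nonneg_left (round_le (z / 2) k) zero_le_two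

theorem distToEven_nonneg (z : ℝ) : 0 ≤ distToEven z := by
  rw [distToEven_eq_abs_sub_round]
  exact abs_nonneg _

theorem distToEven_le_one (z : ℝ) : distToEven z ≤ 1 := by
  rw [distToEven_eq_abs_sub_round, abs_sub_two_mul]
  linarith [abs_sub_round (z / 2)]

theorem sin_sq_pi_mul_div_two_eq_distToEven (z : ℝ) :
    Real.sin (Real.pi * z / 2) ^ 2 = Real.sin (Real.pi * distToEven z / 2) ^ 2 := by
  set t := z - 2 * round (z / 2) with ht
  have hz : Real.pi * z / 2 = Real.pi * t / 2 + round (z / 2) * Real.pi := by rw [ht]; ring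
  rw [hz, Real.sin_sq_add_int_mul_pi, distToEven_eq_abs_sub_round, ← ht]
  rcases abs_cases t with ⟨h, _⟩ | ⟨h, _⟩
  · rw [h]
  · rw [h, mul_neg, neg_div, Real.sin_neg, neg_sq]

theorem strictMonoOn_sin_sq_pi_mul_div_two :
    StrictMonoOn (fun d => Real.sin (Real.pi * d / 2) ^ 2) (Set.Icc 0 1) := by
  intro a ⟨ha0, ha1⟩ b ⟨hb0, hb1⟩ hab
  have hpi := Real.pi_pos
  have hsin := Real.strictMonoOn_sin ⟨by nlinarith, by nlinarith⟩ ⟨by nlinarith, by nlinarith⟩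
    (by nlinarith : Real.pi * a / 2 < Real.pi * b / 2)
  have hsin0 : 0 ≤ Real.sin (Real.pi * a / 2) :=
    Real.sin_nonneg_of_nonneg_of_le_pi (by positivity) (by nlinarith)
  exact pow_lt_pow_left₀ hsin hsin0 two_ne_zero

theorem directivity_monotone_general (N : ℕ) (x y : ℝ)
    (hshift : ∃ m : ℤ, (N : ℝ) * (y - x) / 2 = (m : ℝ))
    (hle : distToEven x ≤ distToEven y) :
    directivity N y ≤ directivity N x ∧
      (distToEven x < distToEven y → Real.sin ((N : ℝ) * Real.pi * x / 2) ≠ 0 →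
        directivity N y < directivity N x) := by
  obtain ⟨m, hm⟩ := hshift
  have hnum : Real.sin (N * Real.pi * y / 2) ^ 2 = Real.sin (N * Real.pi * x / 2) ^ 2 := by
    rw [show N * Real.pi * y / 2 = N * Real.pi * x / 2 + m * Real.pi by
      linear_combination Real.pi * hm, Real.sin_sq_add_int_mul_pi]
  have hdist (z : ℝ) : distToEven z ∈ Set.Icc 0 1 := ⟨distToEven_nonneg z, distToEven_le_one z⟩
  have hden_le : Real.sin (Real.pi * x / 2) ^ 2 ≤ Real.sin (Real.pi * y / 2) ^ 2 := by
    simpa only [← sin_sq_pi_mul_div_two_eq_distToEven] using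
      strictMonoOn_sin_sq_pi_mul_div_two.monotoneOn (hdist x) (hdist y) hle
  by_cases hx0 : Real.sin (Real.pi * x / 2) = 0
  · refine ⟨directivity_of_sin_eq_zero N hx0 ▸ directivity_le_sq N y, fun _ hxN => ?_⟩
    have hxN0 : Real.sin (N * Real.pi * x / 2) ^ 2 = 0 := by
      rw [← directivity_mul_sin_sq, hx0, zero_pow two_ne_zero, mul_zero]
    exact absurd (pow_eq_zero_iff two_ne_zero |>.mp hxN0) hxN
  have hden_x : 0 < Real.sin (Real.pi * x / 2) ^ 2 := by positivity
  have hD (z : ℝ) (hz : 0 < Real.sin (Real.pi * z / 2) ^ 2) :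
      directivity N z = Real.sin (N * Real.pi * z / 2) ^ 2 / Real.sin (Real.pi * z / 2) ^ 2 :=
    eq_div_of_mul_eq hz.ne' (directivity_mul_sin_sq N z)
  rw [hD x hden_x, hD y (hden_x.trans_le hden_le), hnum]
  refine ⟨div_le_div_of_nonneg_left (sq_nonneg _) hden_x hden_le, fun hlt hxN => ?_⟩
  have hden_lt : Real.sin (Real.pi * x / 2) ^ 2 < Real.sin (Real.pi * y / 2) ^ 2 := by
    simpa only [← sin_sq_pi_mul_div_two_eq_distToEven] using
      strictMonoOn_sin_sq_pi_mul_div_two (hdist x) (hdist y) hlt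
  exact div_lt_div_of_pos_left (by positivity) hden_x hden_lt

/-- **Monotonicity of directivity in the folded angular misalignment.**
Let `N > 0` and `x, y : ℝ` with `N(y − x)/2 ∈ ℤ` and the distance from `x` to the even
integers at most that of `y`. Then `D(y) ≤ D(x)`; moreover, if the distance of `x` to the
even integers is strictly smaller than that of `y` and `sin(Nπx/2) ≠ 0`, then `D(y) < D(x)`. -/
theorem directivity_monotone (N : ℕ) (hN : 0 < N) (x y : ℝ)
    (hshift : ∃ m : ℤ, (N : ℝ) * (y - x) / 2 = (m : ℝ))
    (hle : distToEven x ≤ distToEven y) :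
    directivity N y ≤ directivity N x ∧
      (distToEven x < distToEven y → Real.sin ((N : ℝ) * Real.pi * x / 2) ≠ 0 →
        directivity N y < directivity N x) :=
  directivity_monotone_general N x y hshift hle
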